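/- Let F := { σ : σ is a density matrix on ℂ² with Re Tr(σ_z σ) ≤ 0 }, where σ_z = diag(1, −1) (the closed lower hemisphere of the Bloch ball, which equals the convex hull of the pure states cos(θ/2)|0⟩ + e^{iφ} sin(θ/2)|1⟩ with θ ∈ [π/2, 3π/2]). Let U_μ := exp(−iμσ_y/2) with σ_y = [[0, −i], [i, 0]], M₀ := diag(1, 1/2), and for a density matrix σ set p_σ(μ) := Re Tr( M₀ U_μ σ U_μ* ). Then for every σ ∈ F one has 0 < p_σ(0) < 1 and p_σ'(0)² / ( p_σ(0)(1 − p_σ(0)) ) ≤ 1/3, with equality for σ = |+⟩⟨+| where |+⟩ = (|0⟩+|1⟩)/√2; moreover, for every θ ∈ (0, π/2), the pure state ρ_θ = |θ⟩⟨θ| with |θ⟩ = cos(θ/2)|0⟩ + sin(θ/2)|1⟩ satisfies ρ_θ ∉ F and p_{ρ_θ}'(0)² / ( p_{ρ_θ}(0)(1 − p_{ρ_θ}(0)) ) = 2cos²(θ/2)/(3 + cos θ) > 1/3. -/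

import Mathlib

open Matrix
open scoped ComplexOrder

noncomputable section

/-- A density matrix on `ℂ²`. -/
def IsDensityMatrix (ρ : Matrix (Fin 2) (Fin 2) ℂ) : Prop :=
  ρ.PosSemidef ∧ ρ.trace = 1

/-- The Pauli matrix `σ_y`. -/
def sigmaY : Matrix (Fin 2) (Fin 2) ℂ := !![0, -Complex.I; Complex.I, 0]

/-- The Pauli matrix `σ_z`. -/
def sigmaZ : Matrix (Fin 2) (Fin 2) ℂ := !![1, 0; 0, -1]

/-- The rotation `U_μ = exp(−iμσ_y/2)`. -/
def Uy (μ : ℝ) : Matrix (Fin 2) (Fin 2) ℂ :=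
  NormedSpace.exp ((-(Complex.I * (μ : ℂ)) / 2) • sigmaY)

/-- The state `|θ⟩ = cos(θ/2)|0⟩ + sin(θ/2)|1⟩`. -/
def ket (θ : ℝ) : Fin 2 → ℂ := ![(Real.cos (θ / 2) : ℂ), (Real.sin (θ / 2) : ℂ)]

/-- The projection `|θ⟩⟨θ|`. -/
def projKet (θ : ℝ) : Matrix (Fin 2) (Fin 2) ℂ := vecMulVec (ket θ) (star (ket θ))

/-- The POVM element `M₀ = diag(1, 1/2)`. -/
def M0 : Matrix (Fin 2) (Fin 2) ℂ := !![1, 0; 0, (1 / 2 : ℂ)]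

/-- The outcome probability `p_σ(μ) = Re Tr(M₀ U_μ σ U_μ*)`. -/
def pOf (σ : Matrix (Fin 2) (Fin 2) ℂ) (μ : ℝ) : ℝ :=
  ((M0 * (Uy μ * σ * (Uy μ)ᴴ)).trace).re

/-- The lower hemisphere of the Bloch ball: density matrices with `Re Tr(σ_z σ) ≤ 0`. -/
def lowerHemisphere : Set (Matrix (Fin 2) (Fin 2) ℂ) :=
  { σ | IsDensityMatrix σ ∧ ((sigmaZ * σ).trace).re ≤ 0 }

/-!
`U_μ` is the real rotation by `μ / 2`: the exponential commutes with the continuous ring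
embedding `a + b i ↦ !![a, -b; b, a]` of `ℂ` into `2 × 2` matrices, which sends
`(μ / 2) i` to `-(i μ / 2) σ_y`. Hence, with the Bloch coordinates `z = Re Tr(σ_z σ)` and
`x = Re σ₀₁ + Re σ₁₀` of a density matrix, `p_σ(μ) = (3 + z cos μ - x sin μ) / 4`, so the
Fisher information at `0` is `x² / ((3 + z)(1 - z))`. Positivity of `σ` gives `x² ≤ 1 - z²`,
and `3 (1 - z²) ≤ (3 + z)(1 - z)` as soon as `z ≤ 0`. For `|θ⟩⟨θ|` one has
`(x, z) = (sin θ, cos θ)`, and the Fisher information is `(1 + cos θ) / (3 + cos θ)`.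
-/

-- `NormedSpace.map_exp` needs a normed ring structure on the target; any matrix norm induces
-- the product topology with respect to which `Uy` is defined.
attribute [local instance] Matrix.linftyOpNormedRing

def complexToRotation : ℂ →+* Matrix (Fin 2) (Fin 2) ℂ :=
  Complex.ofRealHom.mapMatrix.comp (Algebra.leftMulMatrix Complex.basisOneI).toRingHom

lemma complexToRotation_apply (z : ℂ) :
    complexToRotation z = !![(z.re : ℂ), -(z.im : ℂ); (z.im : ℂ), (z.re : ℂ)] := by
  ext i j
  fin_cases i <;> fin_cases j <;> simp [complexToRotation, Algebra.leftMulMatrix_complex]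

lemma continuous_complexToRotation : Continuous complexToRotation :=
  (continuous_id.matrix_map Complex.continuous_ofReal).comp
    (Algebra.leftMulMatrix Complex.basisOneI).toLinearMap.continuous_of_finiteDimensional

lemma Uy_eq (μ : ℝ) : Uy μ =
    !![(Real.cos (μ / 2) : ℂ), -(Real.sin (μ / 2) : ℂ);
       (Real.sin (μ / 2) : ℂ), (Real.cos (μ / 2) : ℂ)] := by
  have h : (-(Complex.I * μ) / 2) • sigmaY = complexToRotation ((μ / 2 : ℝ) * Complex.I) := by
    ext i j
    fin_cases i <;> fin_cases j <;> simp [complexToRotation_apply, sigmaY] <;> ring_nf <;>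
      simp [Complex.I_sq] <;> ring
  rw [Uy, h]
  refine (NormedSpace.map_exp _ continuous_complexToRotation _).symm.trans ?_
  rw [← Complex.exp_eq_exp_ℂ, complexToRotation_apply, Complex.exp_ofReal_mul_I_re,
    Complex.exp_ofReal_mul_I_im]

lemma pOf_eq (σ : Matrix (Fin 2) (Fin 2) ℂ) (μ : ℝ) :
    pOf σ μ = (3 * ((σ 0 0).re + (σ 1 1).re) + ((σ 0 0).re - (σ 1 1).re) * Real.cos μ
      - ((σ 0 1).re + (σ 1 0).re) * Real.sin μ) / 4 := by
  obtain ⟨t, rfl⟩ : ∃ t, μ = 2 * t := ⟨μ / 2, by ring⟩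
  have hunit := Real.sin_sq_add_cos_sq t
  rw [pOf, Uy_eq, mul_div_cancel_left₀ t two_ne_zero, Real.cos_two_mul, Real.sin_two_mul]
  generalize Real.cos t = c, Real.sin t = s at hunit ⊢
  simp only [M0, trace_fin_two, mul_apply, Fin.sum_univ_two, conjTranspose_apply, of_apply,
    cons_val', cons_val_zero, cons_val_one, empty_val', cons_val_fin_one]
  simp
  linear_combination ((σ 0 0).re + 2 * (σ 1 1).re) / 2 * hunit

lemma re_trace_sigmaZ_mul (σ : Matrix (Fin 2) (Fin 2) ℂ) :
    ((sigmaZ * σ).trace).re = (σ 0 0).re - (σ 1 1).re := by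
  simp [sigmaZ, trace_fin_two, vecMul, dotProduct, Fin.sum_univ_two, sub_eq_add_neg]

lemma pOf_zero (σ : Matrix (Fin 2) (Fin 2) ℂ) :
    pOf σ 0 = (3 * σ.trace.re + (sigmaZ * σ).trace.re) / 4 := by
  rw [pOf_eq, re_trace_sigmaZ_mul, trace_fin_two]
  simp

lemma deriv_pOf_zero (σ : Matrix (Fin 2) (Fin 2) ℂ) :
    deriv (pOf σ) 0 = -((σ 0 1).re + (σ 1 0).re) / 4 := by
  rw [funext (pOf_eq σ)]
  simp

def fisherInfoAtZero (σ : Matrix (Fin 2) (Fin 2) ℂ) : ℝ :=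
  deriv (pOf σ) 0 ^ 2 / (pOf σ 0 * (1 - pOf σ 0))

lemma Matrix.PosSemidef.sq_re_add_re_le {σ : Matrix (Fin 2) (Fin 2) ℂ} (hσ : σ.PosSemidef) :
    ((σ 0 1).re + (σ 1 0).re) ^ 2 ≤ 4 * (σ 0 0).re * (σ 1 1).re := by
  have hquad (u : ℝ) :
      0 ≤ (σ 0 0).re * (u * u) + ((σ 0 1).re + (σ 1 0).re) * u + (σ 1 1).re := by
    have h := hσ.re_dotProduct_nonneg ![(u : ℂ), 1]
    simp [dotProduct, mulVec, Fin.sum_univ_two] at h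
    linarith
  simpa [discrim] using discrim_le_zero hquad

lemma IsDensityMatrix.re_trace {σ : Matrix (Fin 2) (Fin 2) ℂ} (hσ : IsDensityMatrix σ) :
    σ.trace.re = 1 := by
  rw [hσ.2, Complex.one_re]

lemma IsDensityMatrix.sq_re_add_re_le {σ : Matrix (Fin 2) (Fin 2) ℂ} (hσ : IsDensityMatrix σ) :
    ((σ 0 1).re + (σ 1 0).re) ^ 2 ≤ 1 - (sigmaZ * σ).trace.re ^ 2 := by
  have htrace : (σ 0 0).re + (σ 1 1).re = 1 := by
    simpa [trace_fin_two] using hσ.re_trace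
  rw [re_trace_sigmaZ_mul]
  nlinarith [hσ.1.sq_re_add_re_le]

lemma neg_one_le_of_sq_le_one_sub_sq {x z : ℝ} (hx : x ^ 2 ≤ 1 - z ^ 2) : -1 ≤ z := by
  nlinarith [sq_nonneg x]

lemma fisher_bloch_le_one_third {x z : ℝ} (hx : x ^ 2 ≤ 1 - z ^ 2) (hz : z ≤ 0) :
    (-x / 4) ^ 2 / ((3 + z) / 4 * (1 - (3 + z) / 4)) ≤ 1 / 3 := by
  have hz' := neg_one_le_of_sq_le_one_sub_sq hx
  rw [div_le_iff₀ (by nlinarith)]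
  nlinarith

lemma pOf_zero_mem_Ioo_of_mem_lowerHemisphere {σ : Matrix (Fin 2) (Fin 2) ℂ}
    (hσ : σ ∈ lowerHemisphere) : pOf σ 0 ∈ Set.Ioo 0 1 := by
  have hz := neg_one_le_of_sq_le_one_sub_sq hσ.1.sq_re_add_re_le
  rw [pOf_zero, hσ.1.re_trace]
  constructor <;> linarith [hσ.2]

lemma fisherInfoAtZero_le_of_mem_lowerHemisphere {σ : Matrix (Fin 2) (Fin 2) ℂ}
    (hσ : σ ∈ lowerHemisphere) : fisherInfoAtZero σ ≤ 1 / 3 := by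
  rw [fisherInfoAtZero, deriv_pOf_zero, pOf_zero, hσ.1.re_trace, mul_one]
  exact fisher_bloch_le_one_third hσ.1.sq_re_add_re_le hσ.2

lemma projKet_eq (θ : ℝ) : projKet θ =
    !![((Real.cos (θ / 2) ^ 2 : ℝ) : ℂ), ((Real.cos (θ / 2) * Real.sin (θ / 2) : ℝ) : ℂ);
       ((Real.cos (θ / 2) * Real.sin (θ / 2) : ℝ) : ℂ), ((Real.sin (θ / 2) ^ 2 : ℝ) : ℂ)] := by
  ext i j
  fin_cases i <;> fin_cases j <;>
    simp [projKet, ket, vecMulVec_apply, sq, -Complex.ofReal_cos, -Complex.ofReal_sin, mul_comm]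

lemma re_trace_projKet (θ : ℝ) : (projKet θ).trace.re = 1 := by
  simp only [projKet_eq, trace_fin_two_of, Complex.add_re, Complex.ofReal_re]
  exact Real.cos_sq_add_sin_sq _

lemma re_trace_sigmaZ_mul_projKet (θ : ℝ) : (sigmaZ * projKet θ).trace.re = Real.cos θ := by
  obtain ⟨t, rfl⟩ : ∃ t, θ = 2 * t := ⟨θ / 2, by ring⟩
  simp only [re_trace_sigmaZ_mul, projKet_eq, mul_div_cancel_left₀ t two_ne_zero, of_apply,
    cons_val', cons_val_zero, cons_val_one, empty_val', cons_val_fin_one, Complex.ofReal_re]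
  rw [Real.cos_two_mul']

lemma re_add_re_projKet (θ : ℝ) : (projKet θ 0 1).re + (projKet θ 1 0).re = Real.sin θ := by
  obtain ⟨t, rfl⟩ : ∃ t, θ = 2 * t := ⟨θ / 2, by ring⟩
  simp only [projKet_eq, mul_div_cancel_left₀ t two_ne_zero, of_apply,
    cons_val', cons_val_zero, cons_val_one, empty_val', cons_val_fin_one, Complex.ofReal_re]
  rw [Real.sin_two_mul]
  ring

lemma fisherInfoAtZero_projKet {θ : ℝ} (hθ : Real.cos θ ≠ 1) :
    fisherInfoAtZero (projKet θ) = (1 + Real.cos θ) / (3 + Real.cos θ) := by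
  rw [fisherInfoAtZero, deriv_pOf_zero, pOf_zero, re_trace_projKet, re_trace_sigmaZ_mul_projKet,
    re_add_re_projKet, mul_one]
  have h3 : 3 + Real.cos θ ≠ 0 := by linarith [Real.neg_one_le_cos θ]
  have h1 : 1 - Real.cos θ ≠ 0 := sub_ne_zero.2 hθ.symm
  rw [show (3 + Real.cos θ) / 4 * (1 - (3 + Real.cos θ) / 4)
      = (3 + Real.cos θ) * (1 - Real.cos θ) / 16 by ring, div_eq_div_iff (by positivity) h3]
  linear_combination (3 + Real.cos θ) / 16 * Real.sin_sq_add_cos_sq θ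

lemma projKet_not_mem_lowerHemisphere {θ : ℝ} (hθ : 0 < Real.cos θ) :
    projKet θ ∉ lowerHemisphere := fun h ↦ by
  linarith [h.2, re_trace_sigmaZ_mul_projKet θ]

/-- on the lower-hemisphere free set, the binary classical Fisher
information at `μ = 0` of the rotation model is at most `1/3`, with equality at `|+⟩⟨+|`,
while every pure state `|θ⟩⟨θ|` with `θ ∈ (0, π/2)` lies outside the free set and strictly
exceeds `1/3`. -/
theorem lower_hemisphere_example :
    (∀ σ ∈ lowerHemisphere,
        0 < pOf σ 0 ∧ pOf σ 0 < 1 ∧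
          (deriv (pOf σ) 0) ^ 2 / (pOf σ 0 * (1 - pOf σ 0)) ≤ 1 / 3) ∧
      (deriv (pOf (projKet (Real.pi / 2))) 0) ^ 2 /
          (pOf (projKet (Real.pi / 2)) 0 * (1 - pOf (projKet (Real.pi / 2)) 0)) = 1 / 3 ∧
      ∀ θ ∈ Set.Ioo (0 : ℝ) (Real.pi / 2),
        projKet θ ∉ lowerHemisphere ∧
          (deriv (pOf (projKet θ)) 0) ^ 2 /
              (pOf (projKet θ) 0 * (1 - pOf (projKet θ) 0)) =
            2 * Real.cos (θ / 2) ^ 2 / (3 + Real.cos θ) ∧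
          1 / 3 < (deriv (pOf (projKet θ)) 0) ^ 2 /
              (pOf (projKet θ) 0 * (1 - pOf (projKet θ) 0)) := by
  refine ⟨fun σ hσ ↦ ?_, ?_, fun θ hθ ↦ ?_⟩
  · obtain ⟨hpos, hlt⟩ := pOf_zero_mem_Ioo_of_mem_lowerHemisphere hσ
    exact ⟨hpos, hlt, fisherInfoAtZero_le_of_mem_lowerHemisphere hσ⟩
  · have h := fisherInfoAtZero_projKet (θ := Real.pi / 2) (by simp)
    rw [Real.cos_pi_div_two] at h
    norm_num at h
    exact h
  · have hcos_pos : 0 < Real.cos θ :=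
      Real.cos_pos_of_mem_Ioo ⟨by linarith [hθ.1, Real.pi_pos], hθ.2⟩
    have hcos_lt : Real.cos θ < 1 := Real.cos_zero ▸
      Real.cos_lt_cos_of_nonneg_of_le_pi le_rfl (by linarith [hθ.2, Real.pi_pos]) hθ.1
    have h := fisherInfoAtZero_projKet hcos_lt.ne
    refine ⟨projKet_not_mem_lowerHemisphere hcos_pos, ?_, ?_⟩
    · exact h.trans (by rw [Real.cos_sq (θ / 2), mul_div_cancel₀ θ two_ne_zero]; ring)
    · change 1 / 3 < fisherInfoAtZero (projKet θ)
      rw [h, lt_div_iff₀ (by linarith)]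
      linarith

end
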